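/- arXiv:0912.2537 — 6 statements merged into one kernel-verified Lean document; each statement's English description precedes it below -/
import Mathlib

section
/- For the linear operators e_{ij} := ∫^i∂^j − ∫^{i+1}∂^{j+1} on K[x] (where ∂ is differentiation and ∫ is the integration operator sending x^s to x^{s+1}/(s+1)), one has e_{ij} e_{kl} = δ_{jk} e_{il} for all i,j,k,l ∈ ℕ, where δ is the Kronecker delta. -/
/-!
Since `∂ ∫ = 1`, the element `P = 1 - ∫ ∂` is an idempotent with `P ∫ = 0 = ∂ P`, and
`e_{ij} = ∫^i P ∂^j`. In `e_{ij} e_{kl} = ∫^i P (∂^j ∫^k) P ∂^l` the middle factor is `1` when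
`j = k`, a positive power of `∫` when `j < k` and a positive power of `∂` when `j > k`.
-/

open Polynomial

/-- The differentiation operator `∂` on `K[x]` as a `K`-linear endomorphism. -/
noncomputable def Dop (K : Type*) [Field K] : Module.End K (Polynomial K) :=
  Polynomial.derivative

/-- The integration operator `∫` on `K[x]`, sending `x^s` to `x^{s+1}/(s+1)`. -/
noncomputable def Iop (K : Type*) [Field K] : Module.End K (Polynomial K) :=
  Polynomial.lsum fun n =>
    LinearMap.toSpanSingleton K _ (Polynomial.monomial (n + 1) (((n : K) + 1)⁻¹))

/-- The operators `e_{ij} := ∫^i ∂^j − ∫^{i+1} ∂^{j+1}` in `End_K(K[x])`. -/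
noncomputable def eop (K : Type*) [Field K] (i j : ℕ) : Module.End K (Polynomial K) :=
  Iop K ^ i * Dop K ^ j - Iop K ^ (i + 1) * Dop K ^ (j + 1)

namespace OneSidedInverse

variable {R : Type*} [Ring R] {d s : R}

lemma one_sub_mul_mul_eq_zero (h : d * s = 1) : (1 - s * d) * s = 0 := by
  rw [sub_mul, one_mul, mul_assoc, h, mul_one, sub_self]

lemma mul_one_sub_mul_eq_zero (h : d * s = 1) : d * (1 - s * d) = 0 := by
  rw [mul_sub, mul_one, ← mul_assoc, h, one_mul, sub_self]

lemma isIdempotentElem_one_sub_mul (h : d * s = 1) : IsIdempotentElem (1 - s * d) := by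
  rw [IsIdempotentElem, sub_mul, one_mul, mul_assoc, mul_one_sub_mul_eq_zero h, mul_zero,
    sub_zero]

lemma pow_mul_pow_of_le (h : d * s = 1) {j k : ℕ} (hjk : j ≤ k) : d ^ j * s ^ k = s ^ (k - j) := by
  rw [← pow_mul_pow_sub s hjk, ← mul_assoc, pow_mul_pow_eq_one j h, one_mul]

lemma pow_mul_pow_of_ge (h : d * s = 1) {j k : ℕ} (hkj : k ≤ j) : d ^ j * s ^ k = d ^ (j - k) := by
  rw [← pow_sub_mul_pow d hkj, mul_assoc, pow_mul_pow_eq_one k h, mul_one]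

lemma one_sub_mul_mul_pow_mul_pow_mul_one_sub_mul (h : d * s = 1) (j k : ℕ) :
    (1 - s * d) * (d ^ j * s ^ k) * (1 - s * d) = if j = k then 1 - s * d else 0 := by
  rcases lt_trichotomy j k with hjk | rfl | hkj
  · obtain ⟨m, rfl⟩ := Nat.exists_eq_add_of_lt hjk
    rw [if_neg hjk.ne, pow_mul_pow_of_le h hjk.le, show j + m + 1 - j = m + 1 by omega,
      pow_succ', ← mul_assoc, one_sub_mul_mul_eq_zero h, zero_mul, zero_mul]
  · rw [if_pos rfl, pow_mul_pow_eq_one j h, mul_one, isIdempotentElem_one_sub_mul h]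
  · obtain ⟨m, rfl⟩ := Nat.exists_eq_add_of_lt hkj
    rw [if_neg hkj.ne', pow_mul_pow_of_ge h hkj.le, show k + m + 1 - k = m + 1 by omega,
      pow_succ, mul_assoc, mul_assoc, mul_one_sub_mul_eq_zero h, mul_zero, mul_zero]

/-- For `d * s = 1` these are Jacobson's infinite family of matrix units. -/
def matrixUnit (d s : R) (i j : ℕ) : R := s ^ i * (1 - s * d) * d ^ j

lemma pow_mul_pow_sub_pow_mul_pow (i j : ℕ) :
    s ^ i * d ^ j - s ^ (i + 1) * d ^ (j + 1) = matrixUnit d s i j := by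
  rw [matrixUnit, mul_sub, mul_one, sub_mul, pow_succ, pow_succ', mul_assoc, mul_assoc, mul_assoc]

theorem matrixUnit_mul_matrixUnit (h : d * s = 1) (i j k l : ℕ) :
    matrixUnit d s i j * matrixUnit d s k l = if j = k then matrixUnit d s i l else 0 := by
  calc matrixUnit d s i j * matrixUnit d s k l
      = s ^ i * ((1 - s * d) * (d ^ j * s ^ k) * (1 - s * d)) * d ^ l := by
        simp only [matrixUnit, mul_assoc]
    _ = _ := by
        rw [one_sub_mul_mul_pow_mul_pow_mul_one_sub_mul h]
        split_ifs <;> simp only [matrixUnit, mul_assoc, zero_mul, mul_zero]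

end OneSidedInverse

open OneSidedInverse

lemma Dop_mul_Iop (K : Type*) [Field K] [CharZero K] : Dop K * Iop K = 1 := by
  refine Polynomial.lhom_ext' fun n => ?_
  ext a
  have hn : (n : K) + 1 ≠ 0 := Nat.cast_add_one_ne_zero n
  simp [Dop, Iop, LinearMap.toSpanSingleton_apply, smul_monomial, inv_mul_cancel₀ hn]

/-- `e_{ij} e_{kl} = δ_{jk} e_{il}` for all `i, j, k, l ∈ ℕ`. -/
theorem eop_mul_eop (K : Type*) [Field K] [CharZero K] (i j k l : ℕ) :
    eop K i j * eop K k l = if j = k then eop K i l else 0 := by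
  simp only [eop, pow_mul_pow_sub_pow_mul_pow]
  exact matrixUnit_mul_matrixUnit (Dop_mul_Iop K) i j k l
end

section
/- In End_K(K[x]), the centralizer of the multiplication operator x within the subalgebra generated by x, ∂, ∫ contains only polynomials in x; more precisely, any element of K⟨x, ∂, ∫⟩ commuting with x lies in K[x]. -/
open Polynomial

/-- Multiplication by `x` on `K[x]` as a `K`-linear endomorphism. -/
noncomputable def Xop (K : Type*) [Field K] : Module.End K (Polynomial K) :=
  LinearMap.mulLeft K (Polynomial.X : Polynomial K)

/-! An endomorphism of `R[X]` commuting with multiplication by `X` is `R[X]`-linear, hence is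
multiplication by its value at `1`. -/

namespace Polynomial

variable {R : Type*} [CommSemiring R] {f : Module.End R R[X]}

theorem apply_eq_mul_apply_one_of_commute_mulLeft_X (hf : Commute f (LinearMap.mulLeft R X))
    (p : R[X]) : f p = p * f 1 := by
  have hX : ∀ q : R[X], f (X * q) = X * f q := fun q => LinearMap.congr_fun hf.eq q
  induction p using Polynomial.induction_on with
  | C a => rw [← mul_one (C a), ← smul_eq_C_mul, map_smul, smul_mul_assoc, one_mul]
  | add p q hp hq => rw [map_add, hp, hq, add_mul]
  | monomial n a ih =>
    rw [pow_succ, mul_comm (X ^ n) X, ← mul_assoc, mul_comm (C a) X, mul_assoc, hX, ih]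
    ring

theorem eq_mulLeft_of_commute_mulLeft_X (hf : Commute f (LinearMap.mulLeft R X)) :
    f = LinearMap.mulLeft R (f 1) :=
  LinearMap.ext fun p => (apply_eq_mul_apply_one_of_commute_mulLeft_X hf p).trans (mul_comm _ _)

theorem aeval_mulLeft_X (p : R[X]) :
    aeval (LinearMap.mulLeft R (X : R[X])) p = LinearMap.mulLeft R p := by
  have h := aeval_algHom_apply (Algebra.lmul R R[X]) X p
  rwa [aeval_X_left_apply] at h

theorem mem_adjoin_mulLeft_X_of_commute (hf : Commute f (LinearMap.mulLeft R X)) :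
    f ∈ Algebra.adjoin R {LinearMap.mulLeft R (X : R[X])} := by
  rw [Algebra.adjoin_singleton_eq_range_aeval]
  exact ⟨f 1, (aeval_mulLeft_X (f 1)).trans (eq_mulLeft_of_commute_mulLeft_X hf).symm⟩

end Polynomial

theorem centralizer_of_x_general (K : Type*) [Field K]
    (f : Module.End K (Polynomial K))
    (hcomm : Commute f (Xop K)) :
    f ∈ Algebra.adjoin K ({Xop K} : Set (Module.End K (Polynomial K))) :=
  mem_adjoin_mulLeft_X_of_commute hcomm

/-- Any element of the algebra `K⟨x, ∂, ∫⟩ ⊆ End_K(K[x])` commuting with (multiplication by) `x`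
lies in `K[x]`, i.e. in the subalgebra generated by `x` alone. -/
theorem centralizer_of_x (K : Type*) [Field K] [CharZero K]
    (f : Module.End K (Polynomial K))
    (hf : f ∈ Algebra.adjoin K ({Xop K, Dop K, Iop K} : Set (Module.End K (Polynomial K))))
    (hcomm : Commute f (Xop K)) :
    f ∈ Algebra.adjoin K ({Xop K} : Set (Module.End K (Polynomial K))) :=
  centralizer_of_x_general K f hcomm
end

section
/- Let B₁ = K[H][x, x^{−1}; σ] with σ(H) = H − 1. Every K-algebra automorphism of B₁ is of the form ζ^ε ∘ t_λ ∘ s_p for unique ε ∈ {0,1}, λ ∈ K^*, p ∈ K[x, x^{−1}], where ζ: x ↦ x^{−1}, H ↦ −H; t_λ: x ↦ λx, H ↦ H; s_p: x ↦ x, H ↦ H + p. Hence Aut(B₁) ≅ ℤ/2 ⋉ (K^* ⋉ K[x,x^{−1}]). -/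
/-!
Write every element of `B` as `∑ₖ Pₖ(h) xᵏ` with `Pₖ ∈ K[X]` (`coeffPoly`). Since
`xᵏ P(h) = P(h - k) xᵏ`, the components of extreme `x`-degree of a product multiply like
polynomials, so the units of `B` are the `c xᵏ`. Hence `σ x = c x^N`; doing the same for `σ⁻¹`
forces `N = ±1`. The relation `x h = (h - 1) x` then makes `σ h ∓ h` commute with `x`, and an
element commutes with `x` exactly when each `Pₖ` satisfies `Pₖ(X - 1) = Pₖ`, which in
characteristic zero makes `Pₖ` constant: `σ h ∓ h ∈ K[x, x⁻¹]`. Uniqueness is the linear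
independence of the powers of `x`.
-/

open Polynomial

theorem Polynomial.eq_C_of_comp_X_sub_C_eq_self {R : Type*} [CommRing R] [IsDomain R] [CharZero R]
    {p : R[X]} {a : R} (ha : a ≠ 0) (hp : p.comp (X - C a) = p) : p = C (p.eval 0) := by
  have hroot : ∀ n : ℕ, (p - C (p.eval 0)).IsRoot (-(n * a)) := by
    intro n
    induction n with
    | zero => simp
    | succ n ih =>
      have hshift := congrArg (eval (-(n * a))) hp
      simp only [IsRoot, eval_sub, eval_C, eval_comp, eval_X, sub_eq_zero] at ih hshift ⊢
      rw [← ih, ← hshift]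
      push_cast
      ring_nf
  have hinj : Function.Injective fun n : ℕ => -(n * a) := fun n m hnm =>
    Nat.cast_injective (mul_right_cancel₀ ha (neg_injective hnm))
  rw [← sub_eq_zero]
  exact eq_zero_of_infinite_isRoot _ (Set.infinite_of_injective_forall_mem hinj hroot)

theorem SemiconjBy.aeval {R A : Type*} [CommSemiring R] [Semiring A] [Algebra R A] {a y z : A}
    (h : SemiconjBy a y z) (p : R[X]) : SemiconjBy a (aeval y p) (aeval z p) := by
  induction p using Polynomial.induction_on' with
  | add p q hp hq => simpa only [map_add] using hp.add_right hq
  | monomial n r =>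
    simp only [aeval_monomial]
    exact SemiconjBy.mul_right (Algebra.commute_algebraMap_right r a) (h.pow_right n)

section Commutation

variable {B : Type*} [Ring B] {h : B} {x : Bˣ}

theorem units_zpow_mul_eq (hrel : (x : B) * h = (h - 1) * x) (k : ℤ) :
    ((x ^ k : Bˣ) : B) * h = (h - k) * (x ^ k : Bˣ) := by
  have hinv : ((x⁻¹ : Bˣ) : B) * h = (h + 1) * (x⁻¹ : Bˣ) := by
    have hx : h * x = x * (h + 1) := by rw [mul_add, hrel]; noncomm_ring
    rw [Units.eq_mul_inv_iff_mul_eq, mul_assoc, hx, Units.inv_mul_cancel_left]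
  induction k using Int.induction_on with
  | zero => simp
  | succ k ih =>
    rw [zpow_add_one, Units.val_mul, mul_assoc, hrel, ← mul_assoc, mul_sub, mul_one, ih]
    push_cast
    noncomm_ring
  | pred k ih =>
    rw [zpow_sub_one, Units.val_mul, mul_assoc, hinv, ← mul_assoc, mul_add, mul_one, ih]
    push_cast
    noncomm_ring

theorem units_zpow_mul_aeval {R : Type*} [CommRing R] [Algebra R B]
    (hrel : (x : B) * h = (h - 1) * x) (k : ℤ) (p : R[X]) :
    ((x ^ k : Bˣ) : B) * aeval h p = aeval h (p.comp (X - C (k : R))) * (x ^ k : Bˣ) := by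
  rw [aeval_comp, map_sub, aeval_X, aeval_C, map_intCast]
  exact SemiconjBy.aeval (units_zpow_mul_eq hrel k) p

end Commutation

section MonomialBasis

variable {K B : Type*} [Field K] [Ring B] [Algebra K B]

def IsMonomialBasis (b : Module.Basis (ℕ × ℤ) K B) (h : B) (x : Bˣ) : Prop :=
  ∀ m : ℕ, ∀ k : ℤ, b (m, k) = h ^ m * ((x ^ k : Bˣ) : B)

/-- The coefficient of `xᵏ` in `w = ∑ₖ Pₖ(h) xᵏ`, as a polynomial `Pₖ`. -/
noncomputable def coeffPoly (b : Module.Basis (ℕ × ℤ) K B) (k : ℤ) : B →ₗ[K] K[X] :=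
  (basisMonomials K).repr.symm.toLinearMap ∘ₗ
    Finsupp.lcomapDomain (fun m : ℕ => (m, k)) (fun _ _ hm => (Prod.mk.inj hm).1) ∘ₗ
    b.repr.toLinearMap

noncomputable def xSupport (b : Module.Basis (ℕ × ℤ) K B) (w : B) : Finset ℤ :=
  (b.repr w).support.image Prod.snd

variable {b : Module.Basis (ℕ × ℤ) K B} {h : B} {x : Bˣ}

theorem coeff_coeffPoly (k : ℤ) (w : B) (m : ℕ) :
    (coeffPoly b k w).coeff m = b.repr w (m, k) := by
  simp [coeffPoly, Finsupp.linearCombination_apply, Finsupp.sum, coeff_monomial]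
  rfl

theorem eq_of_coeffPoly_eq {u v : B} (huv : ∀ k, coeffPoly b k u = coeffPoly b k v) : u = v :=
  b.ext_elem fun ⟨m, k⟩ => by rw [← coeff_coeffPoly, ← coeff_coeffPoly, huv]

theorem coeffPoly_eq_zero_iff {k : ℤ} {w : B} : coeffPoly b k w = 0 ↔ k ∉ xSupport b w := by
  simp [xSupport, Polynomial.ext_iff, coeff_coeffPoly]

theorem xSupport_nonempty {w : B} (hw : w ≠ 0) : (xSupport b w).Nonempty :=
  (Finsupp.support_nonempty_iff.mpr (by simpa using hw)).image _

theorem coeffPoly_basis (n : ℕ) (j k : ℤ) :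
    coeffPoly b k (b (n, j)) = if j = k then monomial n 1 else 0 := by
  ext m
  rw [coeff_coeffPoly, b.repr_self, Finsupp.single_apply]
  split_ifs <;> simp_all [coeff_monomial]

theorem coeffPoly_aeval_mul_zpow (hb : IsMonomialBasis b h x) (p : K[X]) (j k : ℤ) :
    coeffPoly b k (aeval h p * (x ^ j : Bˣ)) = if j = k then p else 0 := by
  induction p using Polynomial.induction_on' with
  | add p q hp hq => simp only [map_add, add_mul, hp, hq]; split_ifs <;> simp
  | monomial n r =>
    rw [aeval_monomial, mul_assoc, ← hb, ← Algebra.smul_def, map_smul, coeffPoly_basis]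
    split_ifs <;> simp [smul_monomial]

theorem coeffPoly_zpow (hb : IsMonomialBasis b h x) (j k : ℤ) :
    coeffPoly b k (x ^ j : Bˣ) = if j = k then 1 else 0 := by
  simpa using coeffPoly_aeval_mul_zpow hb (1 : K[X]) j k

theorem xSupport_zpow (hb : IsMonomialBasis b h x) (j : ℤ) : xSupport b (x ^ j : Bˣ) = {j} := by
  ext k
  rw [← not_iff_not, ← coeffPoly_eq_zero_iff, coeffPoly_zpow hb, Finset.mem_singleton]
  split_ifs with hjk <;> simp [hjk, eq_comm]

theorem sum_aeval_coeffPoly_mul_zpow (hb : IsMonomialBasis b h x) (w : B) :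
    ∑ k ∈ xSupport b w, aeval h (coeffPoly b k w) * (x ^ k : Bˣ) = w := by
  refine eq_of_coeffPoly_eq (b := b) fun k => ?_
  simp only [map_sum, coeffPoly_aeval_mul_zpow hb, Finset.sum_ite_eq']
  split_ifs with hk
  · rfl
  · exact (coeffPoly_eq_zero_iff.mpr hk).symm

theorem linearIndependent_zpow (hb : IsMonomialBasis b h x) :
    LinearIndependent K fun k : ℤ => ((x ^ k : Bˣ) : B) := by
  have hx : (fun k : ℤ => ((x ^ k : Bˣ) : B)) = b ∘ fun k => (0, k) := by
    funext k; simp [hb 0 k]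
  rw [hx]
  exact b.linearIndependent.comp _ fun _ _ hk => (Prod.mk.inj hk).2

theorem eq_of_algebraMap_mul_zpow_eq (hb : IsMonomialBasis b h x) {c c' : Kˣ} {k k' : ℤ}
    (he : algebraMap K B c * (x ^ k : Bˣ) = algebraMap K B c' * (x ^ k' : Bˣ)) :
    c = c' ∧ k = k' := by
  simp only [← Algebra.smul_def] at he
  obtain rfl := (linearIndependent_zpow hb).eq_of_smul_apply_eq_smul_apply _ _ _ _ c.ne_zero he
  exact ⟨Units.ext (smul_left_injective K ((linearIndependent_zpow hb).ne_zero k) he), rfl⟩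

theorem mul_eq_sum_aeval_mul_zpow (hrel : (x : B) * h = (h - 1) * x)
    (hb : IsMonomialBasis b h x) (u v : B) :
    u * v = ∑ i ∈ xSupport b u, ∑ j ∈ xSupport b v,
      aeval h (coeffPoly b i u * (coeffPoly b j v).comp (X - C (i : K))) * (x ^ (i + j) : Bˣ) := by
  conv_lhs => rw [← sum_aeval_coeffPoly_mul_zpow hb u, ← sum_aeval_coeffPoly_mul_zpow hb v]
  rw [Finset.sum_mul_sum]
  refine Finset.sum_congr rfl fun i _ => Finset.sum_congr rfl fun j _ => ?_
  rw [map_mul, zpow_add, Units.val_mul, mul_assoc, ← mul_assoc ((x ^ i : Bˣ) : B),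
    units_zpow_mul_aeval hrel]
  noncomm_ring

theorem coeffPoly_mul_of_unique (hrel : (x : B) * h = (h - 1) * x)
    (hb : IsMonomialBasis b h x) {u v : B} {i j : ℤ}
    (hij : ∀ i' ∈ xSupport b u, ∀ j' ∈ xSupport b v, i' + j' = i + j → i' = i ∧ j' = j) :
    coeffPoly b (i + j) (u * v) = coeffPoly b i u * (coeffPoly b j v).comp (X - C (i : K)) := by
  simp only [mul_eq_sum_aeval_mul_zpow hrel hb u v, map_sum, coeffPoly_aeval_mul_zpow hb]
  rw [Finset.sum_eq_single i, Finset.sum_eq_single j]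
  · simp
  · intro j' _ hj'
    rw [if_neg (by omega)]
  · intro hj
    simp [coeffPoly_eq_zero_iff.mpr hj]
  · intro i' hi' hi'i
    refine Finset.sum_eq_zero fun j' hj' => if_neg fun he => hi'i (hij i' hi' j' hj' he).1
  · intro hi
    simp [coeffPoly_eq_zero_iff.mpr hi]

theorem coeffPoly_zpow_mul (hrel : (x : B) * h = (h - 1) * x) (hb : IsMonomialBasis b h x)
    (w : B) (j k : ℤ) :
    coeffPoly b (j + k) ((x ^ j : Bˣ) * w) = (coeffPoly b k w).comp (X - C (j : K)) := by
  rw [coeffPoly_mul_of_unique hrel hb, coeffPoly_zpow hb, if_pos rfl, one_mul]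
  intro i' hi' j' _ he
  rw [xSupport_zpow hb, Finset.mem_singleton] at hi'
  omega

theorem coeffPoly_mul_zpow (hrel : (x : B) * h = (h - 1) * x) (hb : IsMonomialBasis b h x)
    (w : B) (j k : ℤ) : coeffPoly b (k + j) (w * (x ^ j : Bˣ)) = coeffPoly b k w := by
  rw [coeffPoly_mul_of_unique hrel hb, coeffPoly_zpow hb, if_pos rfl, one_comp, mul_one]
  intro i' _ j' hj' he
  rw [xSupport_zpow hb, Finset.mem_singleton] at hj'
  omega

theorem add_eq_zero_and_isUnit_coeffPoly (hrel : (x : B) * h = (h - 1) * x)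
    (hb : IsMonomialBasis b h x) {u v : B} (huv : u * v = 1) {i j : ℤ}
    (hi : i ∈ xSupport b u) (hj : j ∈ xSupport b v)
    (hij : ∀ i' ∈ xSupport b u, ∀ j' ∈ xSupport b v, i' + j' = i + j → i' = i ∧ j' = j) :
    i + j = 0 ∧ IsUnit (coeffPoly b i u) := by
  have hprod := coeffPoly_mul_of_unique hrel hb hij
  rw [huv, ← Units.val_one, ← zpow_zero x, coeffPoly_zpow hb] at hprod
  have hne : coeffPoly b i u * (coeffPoly b j v).comp (X - C (i : K)) ≠ 0 := by
    refine mul_ne_zero (mt coeffPoly_eq_zero_iff.mp (not_not.mpr hi)) ?_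
    rw [sub_eq_add_neg, ← C_neg, comp_X_add_C_ne_zero_iff]
    exact mt coeffPoly_eq_zero_iff.mp (not_not.mpr hj)
  split_ifs at hprod with h0
  · exact ⟨h0.symm, IsUnit.of_mul_eq_one _ hprod.symm⟩
  · exact absurd hprod.symm hne

theorem exists_eq_algebraMap_mul_zpow_of_mul_eq_one (hrel : (x : B) * h = (h - 1) * x)
    (hb : IsMonomialBasis b h x) {u v : B} (huv : u * v = 1) :
    ∃ (c : Kˣ) (k : ℤ), u = algebraMap K B c * (x ^ k : Bˣ) := by
  have hone : (1 : B) ≠ 0 := fun hone => by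
    simpa [hone] using coeffPoly_zpow (b := b) hb 0 0
  have hu : u ≠ 0 := by rintro rfl; exact hone (by simpa using huv.symm)
  have hv : v ≠ 0 := by rintro rfl; exact hone (by simpa using huv.symm)
  have hSu := xSupport_nonempty (b := b) hu
  have hSv := xSupport_nonempty (b := b) hv
  obtain ⟨a, haS, ha⟩ : ∃ a ∈ xSupport b u, ∀ k ∈ xSupport b u, k ≤ a :=
    ⟨_, Finset.max'_mem _ hSu, fun k hk => Finset.le_max' _ k hk⟩
  obtain ⟨a', haS', ha'⟩ : ∃ a ∈ xSupport b u, ∀ k ∈ xSupport b u, a ≤ k :=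
    ⟨_, Finset.min'_mem _ hSu, fun k hk => Finset.min'_le _ k hk⟩
  obtain ⟨c, hcS, hc⟩ : ∃ c ∈ xSupport b v, ∀ k ∈ xSupport b v, k ≤ c :=
    ⟨_, Finset.max'_mem _ hSv, fun k hk => Finset.le_max' _ k hk⟩
  obtain ⟨c', hcS', hc'⟩ : ∃ c ∈ xSupport b v, ∀ k ∈ xSupport b v, c ≤ k :=
    ⟨_, Finset.min'_mem _ hSv, fun k hk => Finset.min'_le _ k hk⟩
  obtain ⟨htop, hunit⟩ := add_eq_zero_and_isUnit_coeffPoly hrel hb huv haS hcS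
    fun i' hi' j' hj' _ => by have := ha i' hi'; have := hc j' hj'; omega
  obtain ⟨hbot, -⟩ := add_eq_zero_and_isUnit_coeffPoly hrel hb huv haS' hcS'
    fun i' hi' j' hj' _ => by have := ha' i' hi'; have := hc' j' hj'; omega
  have hSu_eq : xSupport b u = {a} := by
    refine Finset.eq_singleton_iff_unique_mem.mpr ⟨haS, fun k hk => ?_⟩
    have := ha k hk; have := ha' k hk; have := ha a' haS'; have := hc' c hcS
    omega
  obtain ⟨r, hr, hru⟩ := Polynomial.isUnit_iff.mp hunit
  refine ⟨hr.unit, a, ?_⟩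
  conv_lhs => rw [← sum_aeval_coeffPoly_mul_zpow hb u]
  rw [hSu_eq, Finset.sum_singleton, ← hru, aeval_C, IsUnit.unit_spec]

theorem mem_span_zpow_of_commute [CharZero K] (hrel : (x : B) * h = (h - 1) * x)
    (hb : IsMonomialBasis b h x) {w : B} (hw : Commute (x : B) w) :
    w ∈ Submodule.span K (Set.range fun k : ℤ => ((x ^ k : Bˣ) : B)) := by
  have hconst : ∀ k, coeffPoly b k w = C ((coeffPoly b k w).eval 0) := fun k => by
    refine eq_C_of_comp_X_sub_C_eq_self one_ne_zero ?_
    have := coeffPoly_zpow_mul hrel hb w 1 k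
    rw [zpow_one, hw.eq, ← zpow_one x, add_comm, coeffPoly_mul_zpow hrel hb, Int.cast_one] at this
    exact this.symm
  rw [← sum_aeval_coeffPoly_mul_zpow hb w]
  refine Submodule.sum_mem _ fun k _ => ?_
  rw [hconst k, aeval_C, ← Algebra.smul_def]
  exact Submodule.smul_mem _ _ (Submodule.subset_span ⟨k, rfl⟩)

theorem map_units_zpow_of_map_eq {F : Type*} [FunLike F B B] [AlgHomClass F K B B] (f : F)
    {c : Kˣ} {N : ℤ} (hf : f x = algebraMap K B c * (x ^ N : Bˣ)) (k : ℤ) :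
    f (x ^ k : Bˣ) = algebraMap K B (c ^ k : Kˣ) * (x ^ (N * k) : Bˣ) := by
  have hunits : Units.map (f : B →* B) x = Units.map (algebraMap K B : K →* B) c * x ^ N :=
    Units.ext hf
  have hcomm : Commute (Units.map (algebraMap K B : K →* B) c) (x ^ N) :=
    Units.ext (Algebra.commutes _ _)
  calc f (x ^ k : Bˣ) = ((Units.map (f : B →* B) x) ^ k : Bˣ) := by
        rw [← map_zpow, Units.coe_map]; rfl
    _ = algebraMap K B (c ^ k : Kˣ) * (x ^ (N * k) : Bˣ) := by
        rw [hunits, hcomm.mul_zpow, ← map_zpow, zpow_mul, Units.val_mul, Units.coe_map]; rfl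

theorem exponent_eq_one_or_neg_one_of_map_eq (hrel : (x : B) * h = (h - 1) * x)
    (hb : IsMonomialBasis b h x) (σ : B ≃ₐ[K] B) {c : Kˣ} {N : ℤ}
    (hσ : σ x = algebraMap K B c * (x ^ N : Bˣ)) : N = 1 ∨ N = -1 := by
  have hinv : σ.symm x * σ.symm (x⁻¹ : Bˣ) = 1 := by rw [← map_mul, Units.mul_inv, map_one]
  obtain ⟨c', N', hσ'⟩ := exists_eq_algebraMap_mul_zpow_of_mul_eq_one hrel hb hinv
  have hx : algebraMap K B ((1 : Kˣ) : K) * (x ^ (1 : ℤ) : Bˣ) =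
      algebraMap K B ((c' * c ^ N' : Kˣ) : K) * (x ^ (N * N') : Bˣ) := by
    calc algebraMap K B ((1 : Kˣ) : K) * (x ^ (1 : ℤ) : Bˣ) = σ (σ.symm x) := by simp
      _ = _ := by
        rw [hσ', map_mul, AlgEquiv.commutes,
          map_units_zpow_of_map_eq σ hσ, Units.val_mul, map_mul, mul_assoc]
  exact Int.eq_one_or_neg_one_of_mul_eq_one (eq_of_algebraMap_mul_zpow_eq hb hx).2.symm

theorem exists_eq_add_sum_of_zpow_mul_eq [CharZero K] (hrel : (x : B) * h = (h - 1) * x)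
    (hb : IsMonomialBasis b h x) (e : Bool) {w : B}
    (hw : ((x ^ (if e then (-1 : ℤ) else 1) : Bˣ) : B) * w =
      (w - 1) * (x ^ (if e then (-1 : ℤ) else 1) : Bˣ)) :
    ∃ p : ℤ →₀ K, w = (if e then -h else h) + p.sum fun i a => a • ((x ^ i : Bˣ) : B) := by
  suffices hcomm : Commute (x : B) (w - if e then -h else h) by
    obtain ⟨p, hp⟩ := Finsupp.mem_span_range_iff_exists_finsupp.mp
      (mem_span_zpow_of_commute hrel hb hcomm)
    exact ⟨p, by rw [hp, add_sub_cancel]⟩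
  cases e with
  | false =>
    simp only [Bool.false_eq_true, if_false, zpow_one] at hw ⊢
    rw [Commute, SemiconjBy, mul_sub, hw, hrel]
    noncomm_ring
  | true =>
    simp only [if_true, zpow_neg_one, sub_neg_eq_add] at hw ⊢
    have hinv := units_zpow_mul_eq hrel (-1)
    rw [zpow_neg_one, Int.cast_neg, Int.cast_one, sub_neg_eq_add] at hinv
    rw [← Commute.units_inv_left_iff, Commute, SemiconjBy, mul_add, hw, hinv]
    noncomm_ring

end MonomialBasis

/-- Every `K`-algebra automorphism of `B₁` is of the form `ζ^ε ∘ t_λ ∘ s_p` for unique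
`ε ∈ {0,1}`, `λ ∈ K^*`, `p ∈ K[x, x^{−1}]`, where `ζ : x ↦ x^{−1}, H ↦ −H`;
`t_λ : x ↦ λx, H ↦ H`; `s_p : x ↦ x, H ↦ H + p`; i.e. every automorphism sends
`x ↦ λ x^{±1}` and `H ↦ ±H + p(x)`, for unique data `(ε, λ, p)`. -/
theorem aut_of_B1 (K B : Type*) [Field K] [CharZero K] [Ring B] [Algebra K B]
    (h : B) (x : Bˣ) (hrel : (x : B) * h = (h - 1) * (x : B))
    (b : Module.Basis (ℕ × ℤ) K B) (hb : ∀ m : ℕ, ∀ k : ℤ, b (m, k) = h ^ m * ((x ^ k : Bˣ) : B)) :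
    ∀ σ : B ≃ₐ[K] B, ∃! t : Bool × Kˣ × (ℤ →₀ K),
      σ (x : B) = algebraMap K B t.2.1 * ((x ^ (if t.1 then (-1 : ℤ) else 1) : Bˣ) : B) ∧
      σ h = (if t.1 then -h else h) + t.2.2.sum fun i a => a • ((x ^ i : Bˣ) : B) := by
  intro σ
  have hunit : σ x * σ (x⁻¹ : Bˣ) = 1 := by rw [← map_mul, Units.mul_inv, map_one]
  obtain ⟨c, N, hσx⟩ := exists_eq_algebraMap_mul_zpow_of_mul_eq_one hrel hb hunit
  obtain ⟨e, rfl⟩ : ∃ e : Bool, N = if e then -1 else 1 := by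
    rcases exponent_eq_one_or_neg_one_of_map_eq hrel hb σ hσx with rfl | rfl
    exacts [⟨false, rfl⟩, ⟨true, rfl⟩]
  have hσh : ((x ^ (if e then (-1 : ℤ) else 1) : Bˣ) : B) * σ h =
      (σ h - 1) * (x ^ (if e then (-1 : ℤ) else 1) : Bˣ) := by
    have hσrel := congrArg σ hrel
    rw [map_mul, map_mul, map_sub, map_one, hσx, mul_assoc, ← mul_assoc (σ h - 1),
      ← Algebra.commutes, mul_assoc] at hσrel
    exact (c.isUnit.map (algebraMap K B)).mul_left_cancel hσrel
  obtain ⟨p, hp⟩ := exists_eq_add_sum_of_zpow_mul_eq hrel hb e hσh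
  refine ⟨(e, c, p), ⟨hσx, hp⟩, ?_⟩
  rintro ⟨e', c', p'⟩ ⟨hσx', hp'⟩
  obtain ⟨rfl, hee'⟩ := eq_of_algebraMap_mul_zpow_eq hb (hσx'.symm.trans hσx)
  obtain rfl : e' = e := by cases e <;> cases e' <;> simp_all
  have hsum : (p'.sum fun i a => a • ((x ^ i : Bˣ) : B)) =
      p.sum fun i a => a • ((x ^ i : Bˣ) : B) :=
    add_left_cancel (hp'.symm.trans hp)
  obtain rfl : p' = p := linearIndependent_zpow hb (by simpa [Finsupp.linearCombination_apply])
  rfl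
end

section
/- Let B₁ = K[H][x, x^{−1}; σ] with σ(H) = H − 1. The group Aut_{K-alg}(B₁) has trivial centre. -/
/-!
Let `σ` be central in `Aut(B₁)`. The scaling `t₂ : x ↦ 2x` multiplies `h^m x^k` by `2^k`, so
`σ h`, being fixed by `t₂`, is a polynomial `q(h)`. Commuting with the shifts `h ↦ h + c`
(`c ∈ K`) gives `q(X + c) = q + c`, and commuting with `ζ` gives `q(-X) = -q`; hence `q = X`.
Finally, commuting with the shift `h ↦ h + x` forces `σ x = x`, and `h`, `x` generate `B₁`.
-/

open Polynomial

theorem Polynomial.eq_X_of_comp_X_add_C_of_comp_neg_X {R : Type*} [CommRing R] [IsDomain R]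
    [CharZero R] {q : R[X]} (hshift : ∀ c, q.comp (X + C c) = q + C c)
    (hodd : q.comp (-X) = -q) : q = X := by
  have h0 : q.eval 0 = 0 := by
    simpa [eval_comp, CharZero.eq_neg_self_iff] using congr(eval 0 $hodd)
  refine Polynomial.funext fun c => ?_
  simpa [eval_comp, h0] using congr(eval 0 $(hshift c))

theorem eq_zero_of_two_zpow_eq_one {K : Type*} [DivisionRing K] [CharZero K] {k : ℤ}
    (hk : (2 : K) ^ k = 1) : k = 0 := by
  have hQ : (2 : ℚ) ^ k = 2 ^ (0 : ℤ) := Rat.cast_injective (α := K) (by simpa using hk)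
  exact zpow_right_injective₀ (by norm_num) (by norm_num) hQ

theorem coe_zpow_units_map_algebraMap_mul {K A : Type*} [Field K] [Semiring A] [Algebra K A]
    (c : Kˣ) (u : Aˣ) (k : ℤ) :
    (((Units.map (algebraMap K A : K →* A) c * u) ^ k : Aˣ) : A)
      = (c : K) ^ k • ((u ^ k : Aˣ) : A) := by
  have hcomm : Commute (Units.map (algebraMap K A : K →* A) c) u :=
    Units.ext (Algebra.commutes (c : K) (u : A))
  rw [hcomm.mul_zpow, Units.val_mul, ← map_zpow, Units.coe_map, MonoidHom.coe_coe,
    Units.val_zpow_eq_zpow_val, Algebra.smul_def]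

theorem coe_units_map_algebraMap_mul {K A : Type*} [Field K] [Semiring A] [Algebra K A]
    (c : Kˣ) (u : Aˣ) :
    ((Units.map (algebraMap K A : K →* A) c * u : Aˣ) : A) = (c : K) • (u : A) := by
  simpa using coe_zpow_units_map_algebraMap_mul c u 1

section SkewCommutation

variable {K A : Type*} [CommRing K] [Ring A] [Algebra K A] {y : A} {v : Aˣ}

theorem units_zpow_mul_eq_sub_mul (hv : (v : A) * y = (y - 1) * v) (k : ℤ) :
    ((v ^ k : Aˣ) : A) * y = (y - k) * ((v ^ k : Aˣ) : A) := by
  have hv' : ((v⁻¹ : Aˣ) : A) * y = (y + 1) * ((v⁻¹ : Aˣ) : A) := by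
    rw [Units.inv_mul_eq_iff_eq_mul, ← mul_assoc, mul_add, mul_one, hv, sub_one_mul,
      sub_add_cancel, mul_assoc, Units.mul_inv, mul_one]
  induction k using Int.induction_on with
  | zero => simp
  | succ n ih =>
    rw [zpow_add_one, Units.val_mul, mul_assoc, hv, ← mul_assoc, mul_sub, mul_one, ih]
    push_cast
    noncomm_ring
  | pred n ih =>
    rw [zpow_sub_one, Units.val_mul, mul_assoc, hv', ← mul_assoc, mul_add, mul_one, ih]
    push_cast
    noncomm_ring

theorem units_zpow_mul_aeval_s9 (hv : (v : A) * y = (y - 1) * v) (k : ℤ) (P : K[X]) :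
    ((v ^ k : Aˣ) : A) * aeval y P = aeval (y - k) P * ((v ^ k : Aˣ) : A) := by
  induction P using Polynomial.induction_on' with
  | add p q hp hq => rw [map_add, map_add, mul_add, add_mul, hp, hq]
  | monomial n c =>
    rw [aeval_monomial, aeval_monomial, Algebra.left_comm,
      (SemiconjBy.pow_right (units_zpow_mul_eq_sub_mul hv k) n).eq, mul_assoc]

theorem pow_mul_units_zpow_mul_pow_mul_units_zpow (hv : (v : A) * y = (y - 1) * v)
    (m n : ℕ) (k l : ℤ) :
    y ^ m * ((v ^ k : Aˣ) : A) * (y ^ n * ((v ^ l : Aˣ) : A))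
      = aeval y (X ^ m * (X - C (k : K)) ^ n) * ((v ^ (k + l) : Aˣ) : A) := by
  have hn := units_zpow_mul_aeval_s9 (K := K) hv k (X ^ n)
  simp only [aeval_X_pow] at hn
  simp only [map_mul, map_pow, map_sub, aeval_X, map_intCast, zpow_add, Units.val_mul]
  rw [mul_assoc, ← mul_assoc _ (y ^ n), hn]
  noncomm_ring

end SkewCommutation

namespace B1

variable {K B A : Type*} [Field K] [Ring B] [Algebra K B] [Ring A] [Algebra K A]
  {h : B} {x : Bˣ} {b : Module.Basis (ℕ × ℤ) K B}
  (hrel : (x : B) * h = (h - 1) * (x : B))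
  (hb : ∀ m : ℕ, ∀ k : ℤ, b (m, k) = h ^ m * ((x ^ k : Bˣ) : B))

noncomputable def liftLinear (b : Module.Basis (ℕ × ℤ) K B) (y : A) (v : Aˣ) : B →ₗ[K] A :=
  b.constr K fun p => y ^ p.1 * ((v ^ p.2 : Aˣ) : A)

include hb in
theorem liftLinear_aeval_mul (y : A) (v : Aˣ) (P : K[X]) (k : ℤ) :
    liftLinear b y v (aeval h P * ((x ^ k : Bˣ) : B)) = aeval y P * ((v ^ k : Aˣ) : A) := by
  induction P using Polynomial.induction_on' with
  | add p q hp hq => rw [map_add, add_mul, map_add, hp, hq, map_add, add_mul]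
  | monomial n c =>
    simp only [aeval_monomial, ← Algebra.smul_def, smul_mul_assoc, map_smul, ← hb, liftLinear,
      b.constr_basis]

include hrel hb in
theorem liftLinear_mul {y : A} {v : Aˣ} (hv : (v : A) * y = (y - 1) * v) (a c : B) :
    liftLinear b y v (a * c) = liftLinear b y v a * liftLinear b y v c := by
  suffices (LinearMap.mul K B).compr₂ (liftLinear b y v)
      = (LinearMap.mul K A).compl₁₂ (liftLinear b y v) (liftLinear b y v) from
    congr($this a c)
  refine LinearMap.ext_basis b b fun ⟨m, k⟩ ⟨n, l⟩ => ?_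
  simp only [LinearMap.compr₂_apply, LinearMap.compl₁₂_apply, LinearMap.mul_apply', liftLinear,
    b.constr_basis]
  rw [hb, hb, pow_mul_units_zpow_mul_pow_mul_units_zpow (K := K) hrel, ← liftLinear,
    liftLinear_aeval_mul hb, pow_mul_units_zpow_mul_pow_mul_units_zpow (K := K) hv]

noncomputable def lift {y : A} {v : Aˣ} (hv : (v : A) * y = (y - 1) * v) : B →ₐ[K] A :=
  AlgHom.ofLinearMap (liftLinear b y v)
    (by simpa using liftLinear_aeval_mul hb y v 1 0) (liftLinear_mul hrel hb hv)

section Lift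

variable {y : A} {v : Aˣ} (hv : (v : A) * y = (y - 1) * v)

include hb

@[simp]
theorem lift_apply_h : lift hrel hb hv h = y := by
  simpa [lift] using liftLinear_aeval_mul hb y v X 0

@[simp]
theorem lift_apply_units_zpow (k : ℤ) :
    lift hrel hb hv ((x ^ k : Bˣ) : B) = ((v ^ k : Aˣ) : A) := by
  simpa [lift] using liftLinear_aeval_mul hb y v 1 k

@[simp]
theorem lift_apply_x : lift hrel hb hv (x : B) = v := by
  simpa using lift_apply_units_zpow hrel hb hv 1

@[simp]
theorem lift_apply_x_inv : lift hrel hb hv ((x⁻¹ : Bˣ) : B) = ((v⁻¹ : Aˣ) : A) := by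
  simpa using lift_apply_units_zpow hrel hb hv (-1)

end Lift

include hb in
theorem algHom_ext {F G : B →ₐ[K] A} (hh : F h = G h) (hx : F x = G x) : F = G := by
  have hunits : Units.map (F : B →* A) x = Units.map (G : B →* A) x := Units.ext hx
  refine AlgHom.toLinearMap_injective (b.ext fun ⟨m, k⟩ => ?_)
  have hxk := congr(((($hunits) ^ k : Aˣ) : A))
  simp only [← map_zpow, Units.coe_map, MonoidHom.coe_coe] at hxk
  simp [hb, hh, hxk]

include hb in
theorem aeval_injective : Function.Injective (aeval h : K[X] → B) := by
  have hli : LinearIndependent K fun n : ℕ => h ^ n := by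
    convert b.linearIndependent.comp (fun n : ℕ => ((n, 0) : ℕ × ℤ)) fun _ _ => by simp
    simp [hb]
  rw [injective_iff_map_eq_zero]
  intro f hf
  have hcoeff := linearIndependent_iff'.mp hli f.support f.coeff (by
    simpa [aeval_def, eval₂_eq_sum, Polynomial.sum_def, Algebra.smul_def] using hf)
  ext n
  by_cases hn : n ∈ f.support
  · simpa using hcoeff n hn
  · simpa using hn

include hb in
theorem exists_eq_aeval_of_repr_eq_zero {a : B} (ha : ∀ p : ℕ × ℤ, p.2 ≠ 0 → b.repr a p = 0) :
    ∃ q : K[X], a = aeval h q := by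
  refine ⟨(b.repr a).sum fun p r => monomial p.1 r, ?_⟩
  conv_lhs => rw [← b.linearCombination_repr a, Finsupp.linearCombination_apply]
  rw [map_finsuppSum]
  refine Finsupp.sum_congr fun p hp => ?_
  obtain ⟨m, k⟩ := p
  obtain rfl : k = 0 := by_contra fun hk => Finsupp.mem_support_iff.mp hp (ha _ hk)
  simp [hb, aeval_monomial, Algebra.smul_def]

noncomputable def liftEquiv {y y' : B} {v v' : Bˣ} (hv : (v : B) * y = (y - 1) * v)
    (hv' : (v' : B) * y' = (y' - 1) * v') (hy' : lift hrel hb hv y' = h)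
    (hv'x : lift hrel hb hv v' = x) (hy : lift hrel hb hv' y = h) (hvx : lift hrel hb hv' v = x) :
    B ≃ₐ[K] B :=
  AlgEquiv.ofAlgHom (lift hrel hb hv) (lift hrel hb hv')
    (algHom_ext hb (by simp [hy']) (by simp [hv'x])) (algHom_ext hb (by simp [hy]) (by simp [hvx]))

theorem liftEquiv_apply {y y' : B} {v v' : Bˣ} (hv : (v : B) * y = (y - 1) * v)
    (hv' : (v' : B) * y' = (y' - 1) * v') (hy' hv'x hy hvx) (a : B) :
    liftEquiv hrel hb hv hv' hy' hv'x hy hvx a = lift hrel hb hv a := rfl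

include hrel in
theorem scale_rel (c : Kˣ) :
    ((Units.map (algebraMap K B : K →* B) c * x : Bˣ) : B) * h
      = (h - 1) * ((Units.map (algebraMap K B : K →* B) c * x : Bˣ) : B) := by
  simp only [Units.val_mul, Units.coe_map, MonoidHom.coe_coe, mul_assoc, hrel]
  rw [Algebra.commutes, mul_assoc, ← Algebra.commutes]

include hrel in
theorem reflect_rel : ((x⁻¹ : Bˣ) : B) * -h = (-h - 1) * ((x⁻¹ : Bˣ) : B) := by
  have := units_zpow_mul_eq_sub_mul hrel (-1)
  rw [zpow_neg_one] at this
  rw [mul_neg, this]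
  push_cast
  noncomm_ring

include hrel in
theorem shift_rel {z : B} (hz : Commute z x) : (x : B) * (h + z) = (h + z - 1) * x := by
  rw [mul_add, hrel, ← hz.eq]
  noncomm_ring

include hrel hb in
theorem lift_apply_of_mem_adjoin {y : B} (hv : (x : B) * y = (y - 1) * x) {z : B}
    (hz : z ∈ Algebra.adjoin K {(x : B), ((x⁻¹ : Bˣ) : B)}) : lift hrel hb hv z = z := by
  refine AlgHom.adjoin_le_equalizer (lift hrel hb hv) (AlgHom.id K B) ?_ hz
  rintro w (rfl | rfl) <;> simp

theorem commute_x_of_mem_adjoin {z : B} (hz : z ∈ Algebra.adjoin K {(x : B), ((x⁻¹ : Bˣ) : B)}) :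
    Commute z x := by
  refine (Algebra.commute_of_mem_adjoin_of_forall_mem_commute hz ?_).symm
  rintro w (rfl | rfl)
  · exact Commute.refl _
  · exact (Commute.refl (x : B)).units_inv_right

-- The automorphisms `t_c`, `ζ` and `s_z` (for `z ∈ K[x, x⁻¹]`) of the structure theorem.
noncomputable def scale (c : Kˣ) : B ≃ₐ[K] B :=
  liftEquiv hrel hb (scale_rel hrel c) (scale_rel hrel c⁻¹) (by simp)
    (by rw [coe_units_map_algebraMap_mul c⁻¹, map_smul, lift_apply_x, coe_units_map_algebraMap_mul,
      smul_smul, Units.inv_mul, one_smul])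
    (by simp)
    (by rw [coe_units_map_algebraMap_mul c, map_smul, lift_apply_x, coe_units_map_algebraMap_mul,
      smul_smul, Units.mul_inv, one_smul])

noncomputable def reflect : B ≃ₐ[K] B :=
  liftEquiv hrel hb (reflect_rel hrel) (reflect_rel hrel) (by simp) (by simp) (by simp) (by simp)

noncomputable def shift (z : B) (hz : z ∈ Algebra.adjoin K {(x : B), ((x⁻¹ : Bˣ) : B)}) :
    B ≃ₐ[K] B :=
  liftEquiv hrel hb (shift_rel hrel (commute_x_of_mem_adjoin hz))
    (shift_rel hrel (commute_x_of_mem_adjoin (neg_mem hz)))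
    (by simp [lift_apply_of_mem_adjoin, hz]) (by simp) (by simp [lift_apply_of_mem_adjoin, hz])
    (by simp)

@[simp]
theorem scale_apply_h (c : Kˣ) : scale hrel hb c h = h :=
  lift_apply_h hrel hb (scale_rel hrel c)

theorem scale_apply_basis (c : Kˣ) (p : ℕ × ℤ) : scale hrel hb c (b p) = (c : K) ^ p.2 • b p := by
  simp [scale, liftEquiv_apply, hb, coe_zpow_units_map_algebraMap_mul]

theorem repr_scale_apply (c : Kˣ) (a : B) (p : ℕ × ℤ) :
    b.repr (scale hrel hb c a) p = (c : K) ^ p.2 * b.repr a p := by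
  have : Finsupp.lapply p ∘ₗ b.repr.toLinearMap ∘ₗ (scale hrel hb c).toLinearMap
      = (c : K) ^ p.2 • (Finsupp.lapply p ∘ₗ b.repr.toLinearMap) := by
    refine b.ext fun q => ?_
    rcases eq_or_ne q p with rfl | hqp
    · simp [scale_apply_basis]
    · simp [scale_apply_basis, hqp]
  simpa using congr($this a)

@[simp]
theorem reflect_apply_h : reflect hrel hb h = -h :=
  lift_apply_h hrel hb (reflect_rel hrel)

@[simp]
theorem shift_apply_h {z : B} (hz : z ∈ Algebra.adjoin K {(x : B), ((x⁻¹ : Bˣ) : B)}) :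
    shift hrel hb z hz h = h + z :=
  lift_apply_h hrel hb (shift_rel hrel (commute_x_of_mem_adjoin hz))

@[simp]
theorem shift_apply_x {z : B} (hz : z ∈ Algebra.adjoin K {(x : B), ((x⁻¹ : Bˣ) : B)}) :
    shift hrel hb z hz x = x :=
  lift_apply_x hrel hb (shift_rel hrel (commute_x_of_mem_adjoin hz))

theorem exists_eq_aeval_of_scale_apply_eq {c : Kˣ} (hc : ∀ k : ℤ, (c : K) ^ k = 1 → k = 0)
    {a : B} (ha : scale hrel hb c a = a) : ∃ q : K[X], a = aeval h q := by
  refine exists_eq_aeval_of_repr_eq_zero hb fun p hp => ?_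
  have hfix := repr_scale_apply hrel hb c a p
  rw [ha, eq_comm] at hfix
  by_contra hr
  exact hp (hc p.2 ((mul_eq_right₀ hr).mp hfix))

end B1

/-- The group `Aut_{K-alg}(B₁)` has trivial centre. -/
theorem center_aut_B1_trivial (K B : Type*) [Field K] [CharZero K] [Ring B] [Algebra K B]
    (h : B) (x : Bˣ) (hrel : (x : B) * h = (h - 1) * (x : B))
    (b : Module.Basis (ℕ × ℤ) K B) (hb : ∀ m : ℕ, ∀ k : ℤ, b (m, k) = h ^ m * ((x ^ k : Bˣ) : B)) :
    ∀ σ : B ≃ₐ[K] B, (∀ τ : B ≃ₐ[K] B, σ * τ = τ * σ) → σ = 1 := by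
  intro σ hσ
  have comm (τ : B ≃ₐ[K] B) (a : B) : σ (τ a) = τ (σ a) := congr($(hσ τ) a)
  obtain ⟨q, hq⟩ := B1.exists_eq_aeval_of_scale_apply_eq hrel hb (c := Units.mk0 2 two_ne_zero)
    (fun k hk => eq_zero_of_two_zpow_eq_one (by simpa using hk)) (by rw [← comm, B1.scale_apply_h])
  have hshift (c : K) : q.comp (X + C c) = q + C c := by
    have hc : algebraMap K B c ∈ Algebra.adjoin K {(x : B), ((x⁻¹ : Bˣ) : B)} :=
      Subalgebra.algebraMap_mem _ c
    refine B1.aeval_injective hb ?_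
    rw [aeval_comp, map_add, aeval_X, aeval_C, ← B1.shift_apply_h hrel hb hc, aeval_algHom_apply,
      ← hq, ← comm, B1.shift_apply_h, map_add, AlgEquiv.commutes, hq, map_add, aeval_C]
  have hodd : q.comp (-X) = -q := by
    refine B1.aeval_injective hb ?_
    rw [aeval_comp, map_neg, aeval_X, ← B1.reflect_apply_h hrel hb, aeval_algHom_apply, ← hq,
      ← comm, B1.reflect_apply_h, map_neg, hq, map_neg]
  have hσh : σ h = h := by
    rw [hq, Polynomial.eq_X_of_comp_X_add_C_of_comp_neg_X hshift hodd, aeval_X]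
  have hσx : σ x = x := by
    have := comm (B1.shift hrel hb x (Algebra.subset_adjoin (by simp))) h
    rwa [B1.shift_apply_h, map_add, hσh, B1.shift_apply_h, add_right_inj] at this
  have hσ1 : (σ : B →ₐ[K] B) = AlgHom.id K B := B1.algHom_ext hb hσh hσx
  exact AlgEquiv.ext fun a => congr($hσ1 a)
end

section
/- Let A be a K-algebra having a unique (up to isomorphism) faithful simple module M, realized as a subalgebra of End_K(M). Then every K-algebra automorphism σ of A is of the form σ(a) = φ a φ^{−1} for some K-linear automorphism φ of M satisfying φ A φ^{−1} = A. -/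
/-- A representation `ρ : A → End_K(M)` is (absolutely) simple if the only `A`-invariant
`K`-subspaces of `M` are `⊥` and `⊤`, and `M ≠ 0`. -/
def IsSimpleRep {K A M : Type*} [Field K] [Ring A] [Algebra K A]
    [AddCommGroup M] [Module K M] (ρ : A →ₐ[K] Module.End K M) : Prop :=
  (∃ m : M, m ≠ 0) ∧
    ∀ N : Submodule K M, (∀ a : A, ∀ m ∈ N, ρ a m ∈ N) → N = ⊥ ∨ N = ⊤

theorem IsSimpleRep.comp_of_surjective {K A B M : Type*} [Field K] [Ring A] [Ring B]
    [Algebra K A] [Algebra K B] [AddCommGroup M] [Module K M]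
    {ρ : A →ₐ[K] Module.End K M} (hρ : IsSimpleRep ρ) {f : B →ₐ[K] A}
    (hf : Function.Surjective f) : IsSimpleRep (ρ.comp f) := by
  refine ⟨hρ.1, fun N hN => hρ.2 N fun a m hm => ?_⟩
  obtain ⟨b, rfl⟩ := hf a
  exact hN b m hm

/-- If a `K`-algebra `A ⊆ End_K(M)` (faithfully represented via `ρ`) has `M` as its unique
(up to isomorphism) faithful simple module, then every `K`-algebra automorphism `σ` of `A` is
given by conjugation: `σ(a) = φ a φ⁻¹` for some `φ ∈ Aut_K(M)` with `φ A φ⁻¹ = A`. -/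
theorem aut_eq_conj_of_unique_faithful_simple (K A : Type u_1) (M : Type u_2) [Field K] [Ring A]
    [Algebra K A] [AddCommGroup M] [Module K M]
    (ρ : A →ₐ[K] Module.End K M) (hinj : Function.Injective ρ) (hsimple : IsSimpleRep ρ)
    (huniq : ∀ (M' : Type u_2) [AddCommGroup M'] [Module K M']
      (ρ' : A →ₐ[K] Module.End K M'), Function.Injective ρ' → IsSimpleRep ρ' →
      ∃ φ : M ≃ₗ[K] M', ∀ a : A,
        ρ' a = φ.toLinearMap ∘ₗ ρ a ∘ₗ φ.symm.toLinearMap) :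
    ∀ σ : A ≃ₐ[K] A, ∃ φ : M ≃ₗ[K] M,
      (∀ a : A, ρ (σ a) = φ.toLinearMap ∘ₗ ρ a ∘ₗ φ.symm.toLinearMap) ∧
      (∀ a : A, ∃ b : A, φ.toLinearMap ∘ₗ ρ a ∘ₗ φ.symm.toLinearMap = ρ b) := by
  intro σ
  -- `ρ ∘ σ` is the twisted module `^σM`: faithful and simple, hence isomorphic to `M`.
  obtain ⟨φ, hφ⟩ := huniq M (ρ.comp σ.toAlgHom) (hinj.comp σ.injective)
    (hsimple.comp_of_surjective σ.surjective)
  exact ⟨φ, hφ, fun a => ⟨σ a, (hφ a).symm⟩⟩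
end

section
/- Let K[H] be the polynomial ring and consider the simple skew Laurent algebra B₁ = K[H][x,x^{−1};σ], σ(H)=H−1. Then B₁ is a simple K-algebra (it has no nonzero proper two-sided ideals). -/
/-!
The inner derivation `a ↦ h a - a h` is diagonal in the basis `h^m x^k`, with eigenvalue `k`.
A nonzero two-sided ideal is stable under it, hence contains an eigenvector; such an element is
`p(h) x^k` with `p ≠ 0`, so the ideal contains `p(h)`. Conjugation by `x` sends `p(h)` to
`p(h + 1)`, so the ideal contains every forward difference of `p(h)`. The `(deg p)`-th one is the
scalar `(deg p)! · lc p`, which is nonzero in characteristic zero, so the ideal contains `1`.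
-/

open Polynomial

theorem Units.lie_zpow_of_lie_eq_self {A : Type*} [Ring A] {a : A} {u : Aˣ}
    (hu : ⁅a, (u : A)⁆ = u) (k : ℤ) : ⁅a, ((u ^ k : Aˣ) : A)⁆ = k * ((u ^ k : Aˣ) : A) := by
  rw [Ring.lie_def] at hu ⊢
  induction k using Int.induction_on with
  | zero => simp
  | succ k ih =>
    calc a * ((u ^ ((k : ℤ) + 1) : Aˣ) : A) - ((u ^ ((k : ℤ) + 1) : Aˣ) : A) * a
        = (a * ((u ^ (k : ℤ) : Aˣ) : A) - ((u ^ (k : ℤ) : Aˣ) : A) * a) * u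
          + ((u ^ (k : ℤ) : Aˣ) : A) * (a * u - u * a) := by
          rw [zpow_add_one, Units.val_mul]; noncomm_ring
      _ = (((k : ℤ) + 1 : ℤ) : A) * ((u ^ ((k : ℤ) + 1) : Aˣ) : A) := by
          rw [ih, hu, zpow_add_one, Units.val_mul]; push_cast; noncomm_ring
  | pred k ih =>
    have hinv : a * ↑u⁻¹ - ↑u⁻¹ * a = -(↑u⁻¹ : A) := by
      calc a * ↑u⁻¹ - ↑u⁻¹ * a = -(↑u⁻¹ * (a * u - u * a) * ↑u⁻¹) := by
            simp only [mul_sub, sub_mul, ← mul_assoc, Units.inv_mul, one_mul]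
            simp only [mul_assoc, Units.mul_inv, mul_one]; abel
        _ = -(↑u⁻¹ : A) := by rw [hu, Units.inv_mul, one_mul]
    calc a * ((u ^ (-(k : ℤ) - 1) : Aˣ) : A) - ((u ^ (-(k : ℤ) - 1) : Aˣ) : A) * a
        = (a * ((u ^ (-(k : ℤ)) : Aˣ) : A) - ((u ^ (-(k : ℤ)) : Aˣ) : A) * a) * ↑u⁻¹
          + ((u ^ (-(k : ℤ)) : Aˣ) : A) * (a * ↑u⁻¹ - ↑u⁻¹ * a) := by
          rw [zpow_sub_one, Units.val_mul]; noncomm_ring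
      _ = ((-(k : ℤ) - 1 : ℤ) : A) * ((u ^ (-(k : ℤ) - 1) : Aˣ) : A) := by
          rw [ih, hinv, zpow_sub_one, Units.val_mul]; push_cast; noncomm_ring

theorem Module.Basis.repr_apply_of_apply_eq_smul {K M ι : Type*} [CommRing K] [AddCommGroup M]
    [Module K M] (b : Module.Basis ι K M) (w : ι → K) {f : Module.End K M}
    (hf : ∀ i, f (b i) = w i • b i) (a : M) (i : ι) : b.repr (f a) i = w i * b.repr a i := by
  classical
  have hcoord : Finsupp.lapply i ∘ₗ b.repr.toLinearMap ∘ₗ f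
      = w i • (Finsupp.lapply i ∘ₗ b.repr.toLinearMap) :=
    b.ext fun j => by
      rcases eq_or_ne j i with rfl | hji
      · simp [hf]
      · simp [hf, hji]
  exact LinearMap.congr_fun hcoord a

theorem Submodule.exists_hasEigenvector_of_basis {K M ι : Type*} [Field K] [AddCommGroup M]
    [Module K M] (b : Module.Basis ι K M) (w : ι → K) {f : Module.End K M}
    (hf : ∀ i, f (b i) = w i • b i) {N : Submodule K M} (hN : ∀ a ∈ N, f a ∈ N) {a : M}
    (haN : a ∈ N) (ha0 : a ≠ 0) : ∃ μ, ∃ c ∈ N, f.HasEigenvector μ c := by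
  classical
  -- `f a - μ • a` kills the coordinates of `a` with eigenvalue `μ` and rescales the others.
  suffices key : ∀ S : Finset K, ∀ a ∈ N, a ≠ 0 → (∀ i ∈ (b.repr a).support, w i ∈ S) →
      ∃ μ, ∃ c ∈ N, f.HasEigenvector μ c from
    key _ a haN ha0 fun i hi => Finset.mem_image_of_mem w hi
  intro S
  induction S using Finset.induction_on with
  | empty =>
    intro a _ ha0 hS
    refine absurd (b.repr.map_eq_zero_iff.mp ?_) ha0
    exact Finsupp.support_eq_empty.mp
      (Finset.eq_empty_of_forall_notMem fun i hi => by simpa using hS i hi)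
  | insert μ S _ ih =>
    intro a haN ha0 hS
    by_cases hμ : f a = μ • a
    · exact ⟨μ, a, haN, Module.End.hasEigenvector_iff.mpr
        ⟨Module.End.mem_eigenspace_iff.mpr hμ, ha0⟩⟩
    refine ih (f a - μ • a) (N.sub_mem (hN a haN) (N.smul_mem μ haN)) (sub_ne_zero.mpr hμ) ?_
    intro i hi
    have hcoeff : b.repr (f a - μ • a) i = (w i - μ) * b.repr a i := by
      simp [b.repr_apply_of_apply_eq_smul w hf, sub_mul]
    rw [Finsupp.mem_support_iff, hcoeff] at hi
    exact (Finset.mem_insert.mp (hS i (Finsupp.mem_support_iff.mpr (right_ne_zero_of_mul hi)))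
      ).resolve_left (sub_ne_zero.mp (left_ne_zero_of_mul hi))

theorem Polynomial.iterate_comp_X_add_one_sub_natDegree {R : Type*} [CommRing R] [IsDomain R]
    [Infinite R] (p : R[X]) :
    (fun q : R[X] => q.comp (X + 1) - q)^[p.natDegree] p
      = C (p.leadingCoeff * p.natDegree.factorial) := by
  have hsemiconj : Function.Semiconj (fun q : R[X] => q.eval) (fun q => q.comp (X + 1) - q)
      (fwdDiff 1) := fun q => by
    funext t
    simp [fwdDiff, add_comm]
  refine Polynomial.funext fun t => ?_
  rw [congrFun ((hsemiconj.iterate_right p.natDegree) p) t, p.fwdDiff_iter_degree_eq_factorial]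
  simp [mul_comm]

namespace B1

variable {K B : Type*} [Field K] [Ring B] [Algebra K B] {h : B} {x : Bˣ}

theorem lie_h_x (hrel : (x : B) * h = (h - 1) * (x : B)) : ⁅h, (x : B)⁆ = x := by
  rw [Ring.lie_def, hrel]; noncomm_ring

theorem ad_basis (hrel : (x : B) * h = (h - 1) * (x : B))
    {b : Module.Basis (ℕ × ℤ) K B} (hb : ∀ m : ℕ, ∀ k : ℤ, b (m, k) = h ^ m * ((x ^ k : Bˣ) : B))
    (j : ℕ × ℤ) : (LinearMap.mulLeft K h - LinearMap.mulRight K h) (b j) = (j.2 : K) • b j := by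
  have hpow : ⁅h, h ^ j.1 * ((x ^ j.2 : Bˣ) : B)⁆ = h ^ j.1 * ⁅h, ((x ^ j.2 : Bˣ) : B)⁆ := by
    simp only [Ring.lie_def, mul_sub, ← mul_assoc, ← pow_succ, ← pow_succ']
  rw [LinearMap.sub_apply, LinearMap.mulLeft_apply, LinearMap.mulRight_apply, ← Ring.lie_def, hb,
    hpow, Units.lie_zpow_of_lie_eq_self (lie_h_x hrel), Int.cast_smul_eq_zsmul, zsmul_eq_mul,
    ← mul_assoc, ← (Int.cast_commute _ _).eq, mul_assoc]

theorem exists_eq_aeval_mul_zpow {b : Module.Basis (ℕ × ℤ) K B}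
    (hb : ∀ m : ℕ, ∀ k : ℤ, b (m, k) = h ^ m * ((x ^ k : Bˣ) : B)) {c : B} {k : ℤ}
    (hc : ∀ j ∈ (b.repr c).support, j.2 = k) :
    ∃ p : K[X], c = aeval h p * ((x ^ k : Bˣ) : B) := by
  refine ⟨∑ j ∈ (b.repr c).support, monomial j.1 (b.repr c j), ?_⟩
  conv_lhs => rw [← b.linearCombination_repr c, Finsupp.linearCombination_apply, Finsupp.sum]
  rw [map_sum, Finset.sum_mul]
  refine Finset.sum_congr rfl fun j hj => ?_
  rw [aeval_monomial, ← hc j hj, mul_assoc, ← hb, Algebra.smul_def]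

theorem exists_eq_aeval_mul_zpow_of_hasEigenvector [CharZero K]
    (hrel : (x : B) * h = (h - 1) * (x : B)) {b : Module.Basis (ℕ × ℤ) K B}
    (hb : ∀ m : ℕ, ∀ k : ℤ, b (m, k) = h ^ m * ((x ^ k : Bˣ) : B)) {μ : K} {c : B}
    (hc : Module.End.HasEigenvector (LinearMap.mulLeft K h - LinearMap.mulRight K h) μ c) :
    ∃ p : K[X], ∃ k : ℤ, c = aeval h p * ((x ^ k : Bˣ) : B) := by
  have hdeg : ∀ j ∈ (b.repr c).support, (j.2 : K) = μ := fun j hj => by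
    have hcoeff := b.repr_apply_of_apply_eq_smul _ (ad_basis hrel hb) c j
    rw [hc.apply_eq_smul, map_smul, Finsupp.smul_apply, smul_eq_mul] at hcoeff
    exact (mul_right_cancel₀ (Finsupp.mem_support_iff.mp hj) hcoeff).symm
  obtain ⟨j₀, hj₀⟩ : (b.repr c).support.Nonempty :=
    Finsupp.support_nonempty_iff.mpr ((map_ne_zero_iff _ b.repr.injective).mpr hc.2)
  obtain ⟨p, hp⟩ := exists_eq_aeval_mul_zpow hb (k := j₀.2) fun j hj =>
    Int.cast_injective ((hdeg j hj).trans (hdeg j₀ hj₀).symm)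
  exact ⟨p, j₀.2, hp⟩

theorem aeval_comp_X_add_one (hrel : (x : B) * h = (h - 1) * (x : B)) (p : K[X]) :
    aeval h (p.comp (X + 1)) = ↑x⁻¹ * aeval h p * ↑x := by
  let conj := MulSemiringAction.toAlgEquiv K B (ConjAct.toConjAct x⁻¹)
  have hconj : ∀ a, conj a = ↑x⁻¹ * a * ↑x := fun a => by
    simp [conj, ConjAct.units_smul_def]
  have hshift : conj h = h + 1 := by
    rw [hconj, mul_assoc, show h * ↑x = ↑x * (h + 1) by rw [mul_add, hrel]; noncomm_ring,
      Units.inv_mul_cancel_left]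
  rw [aeval_comp, map_add, aeval_X, map_one, ← hshift, aeval_algEquiv, AlgHom.comp_apply,
    AlgEquiv.coe_toAlgHom, hconj]

theorem one_mem_of_aeval_mem [CharZero K] (hrel : (x : B) * h = (h - 1) * (x : B))
    {I : TwoSidedIdeal B} {p : K[X]} (hp : p ≠ 0) (hpI : aeval h p ∈ I) : (1 : B) ∈ I := by
  have hshift : ∀ q : K[X], aeval h q ∈ I → aeval h (q.comp (X + 1) - q) ∈ I := fun q hq => by
    rw [map_sub, aeval_comp_X_add_one hrel]
    exact I.sub_mem (I.mul_mem_right _ _ (I.mul_mem_left _ _ hq)) hq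
  have hconst := Function.Iterate.rec (fun q => aeval h q ∈ I) hpI hshift p.natDegree
  rw [Polynomial.iterate_comp_X_add_one_sub_natDegree, aeval_C] at hconst
  have hne : p.leadingCoeff * p.natDegree.factorial ≠ 0 :=
    mul_ne_zero (leadingCoeff_ne_zero.mpr hp) (Nat.cast_ne_zero.mpr p.natDegree.factorial_ne_zero)
  have hunit := I.mul_mem_left (algebraMap K B (p.leadingCoeff * p.natDegree.factorial)⁻¹) _ hconst
  rwa [← map_mul, inv_mul_cancel₀ hne, map_one] at hunit

end B1

/-- `B₁ = K[H][x,x^{−1};σ]` with `σ(H) = H−1` is a simple `K`-algebra. -/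
theorem B1_simple (K B : Type*) [Field K] [CharZero K] [Ring B] [Algebra K B]
    (h : B) (x : Bˣ) (hrel : (x : B) * h = (h - 1) * (x : B))
    (b : Module.Basis (ℕ × ℤ) K B) (hb : ∀ m : ℕ, ∀ k : ℤ, b (m, k) = h ^ m * ((x ^ k : Bˣ) : B)) :
    IsSimpleRing B := by
  have : Nontrivial B := ⟨b (0, 0), 0, b.ne_zero (0, 0)⟩
  refine IsSimpleRing.of_eq_bot_or_eq_top fun I => or_iff_not_imp_left.mpr fun hI => I.eq_top ?_
  obtain ⟨a, haI, ha0⟩ : ∃ a ∈ I, a ≠ 0 := by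
    by_contra! h0
    exact hI (eq_bot_iff.mpr fun a ha => (TwoSidedIdeal.mem_bot _).mpr (h0 a ha))
  obtain ⟨μ, c, hcI, hc⟩ := Submodule.exists_hasEigenvector_of_basis b _ (B1.ad_basis hrel hb)
    (N := I.asIdeal.restrictScalars K)
    (fun a ha => by simpa using I.sub_mem (I.mul_mem_left h a ha) (I.mul_mem_right a h ha))
    haI ha0
  obtain ⟨p, k, rfl⟩ := B1.exists_eq_aeval_mul_zpow_of_hasEigenvector hrel hb hc
  refine B1.one_mem_of_aeval_mem hrel (p := p) ?_ ?_
  · rintro rfl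
    exact hc.2 (by simp)
  · simpa using I.mul_mem_right _ ((x ^ k)⁻¹ : Bˣ) hcI
end
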